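/- The operator T defined by Th(t) = χ_{(0,1)}(t) · t φ_β(t) · ∫_t^1 h(s)/(s² φ_β(s)) ds is bounded on L¹(0,∞) with norm at most n/(n+β), and bounded on L^∞(0,∞) with norm at most n/β. -/

import Mathlib

/-! On `(0, 1)` one has `t φ_β(t) = t ^ a` and `s² φ_β(s) = s ^ (1 + a)` with `a = β / n`, so
`|T h(t)| ≤ t ^ a ∫_t^1 |h(s)| s ^ (-1 - a) ds`. Exchanging the order of integration gives the
L¹ bound, because `s ^ (-1 - a) ∫_0^s t ^ a dt = 1 / (1 + a) = n / (n + β)`; the L^∞ bound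
comes from `t ^ a ∫_t^∞ s ^ (-1 - a) ds = 1 / a = n / β`. -/

open MeasureTheory Set Real

noncomputable def phi (n : ℕ) (β : ℝ) (t : ℝ) : ℝ := min (t ^ (-1 + β / n)) t⁻¹

/-- The auxiliary operator `T h(t) = χ_{(0,1)}(t) t φ_β(t) ∫_t^1 h(s)/(s² φ_β(s)) ds`. -/
noncomputable def Taux (n : ℕ) (β : ℝ) (h : ℝ → ℝ) (t : ℝ) : ℝ :=
  if t ∈ Ioo (0 : ℝ) 1 then t * phi n β t * ∫ s in Ioo t 1, h s / (s ^ 2 * phi n β s)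
  else 0

open scoped ENNReal

lemma lintegral_mul_setLIntegral_Ioo_comm (μ : Measure ℝ) [SFinite μ] {a b : ℝ}
    {g k : ℝ → ℝ≥0∞} (hg : Measurable g) (hk : Measurable k) :
    ∫⁻ t in Ioo a b, g t * ∫⁻ s in Ioo t b, k s ∂μ ∂μ =
      ∫⁻ s in Ioo a b, k s * ∫⁻ t in Ioo a s, g t ∂μ ∂μ := by
  set F : ℝ → ℝ → ℝ≥0∞ := fun t s =>
    {p : ℝ × ℝ | p.1 < p.2}.indicator (fun p => g p.1 * k p.2) (t, s)
  have hF : Measurable (Function.uncurry F) :=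
    ((hg.comp measurable_fst).mul (hk.comp measurable_snd)).indicator
      (measurableSet_lt measurable_fst measurable_snd)
  have hleft : ∀ t ∈ Ioo a b,
      g t * ∫⁻ s in Ioo t b, k s ∂μ = ∫⁻ s in Ioo a b, F t s ∂μ := by
    intro t ht
    have : ∀ s, F t s = (Ioi t).indicator (fun s => g t * k s) s := fun s => by
      simp only [F, indicator_apply, mem_ofPred_eq, mem_Ioi]
    simp_rw [this]
    rw [lintegral_indicator measurableSet_Ioi, Measure.restrict_restrict measurableSet_Ioi,
      Ioi_inter_Ioo, max_eq_left ht.1.le, lintegral_const_mul _ hk]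
  have hright : ∀ s ∈ Ioo a b,
      k s * ∫⁻ t in Ioo a s, g t ∂μ = ∫⁻ t in Ioo a b, F t s ∂μ := by
    intro s hs
    have : ∀ t, F t s = (Iio s).indicator (fun t => k s * g t) t := fun t => by
      simp only [F, indicator_apply, mem_ofPred_eq, mem_Iio, mul_comm]
    simp_rw [this]
    rw [lintegral_indicator measurableSet_Iio, Measure.restrict_restrict measurableSet_Iio,
      Iio_inter_Ioo, min_eq_left hs.2.le, lintegral_const_mul _ hg]
  rw [setLIntegral_congr_fun measurableSet_Ioo hleft,
    setLIntegral_congr_fun measurableSet_Ioo hright]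
  exact lintegral_lintegral_swap hF.aemeasurable

lemma lintegral_Ioo_zero_rpow {a s : ℝ} (ha : -1 < a) (hs : 0 < s) :
    ∫⁻ t in Ioo 0 s, ENNReal.ofReal (t ^ a) = ENNReal.ofReal (s ^ (a + 1) / (a + 1)) := by
  have hint : IntegrableOn (fun t : ℝ => t ^ a) (Ioo 0 s) :=
    (intervalIntegral.intervalIntegrable_rpow' ha).1.mono_set Ioo_subset_Ioc_self
  rw [← ofReal_integral_eq_lintegral_ofReal hint
      (ae_restrict_of_forall_mem measurableSet_Ioo fun t ht => rpow_nonneg ht.1.le a),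
    ← integral_Ioc_eq_integral_Ioo, ← intervalIntegral.integral_of_le hs.le,
    integral_rpow (Or.inl ha), zero_rpow (by linarith), sub_zero]

lemma lintegral_Ioi_rpow {a c : ℝ} (ha : a < -1) (hc : 0 < c) :
    ∫⁻ t in Ioi c, ENNReal.ofReal (t ^ a) = ENNReal.ofReal (-c ^ (a + 1) / (a + 1)) := by
  rw [← ofReal_integral_eq_lintegral_ofReal (integrableOn_Ioi_rpow_of_lt ha hc)
      (ae_restrict_of_forall_mem measurableSet_Ioi fun t ht => rpow_nonneg (hc.trans ht).le a),
    integral_Ioi_rpow_of_lt ha hc]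

noncomputable def dualHardy (a : ℝ) (f : ℝ → ℝ≥0∞) (t : ℝ) : ℝ≥0∞ :=
  ENNReal.ofReal (t ^ a) * ∫⁻ s in Ioo t 1, f s * ENNReal.ofReal (s ^ (-(1 + a)))

lemma lintegral_dualHardy {a : ℝ} (ha : 0 < a) {f : ℝ → ℝ≥0∞} (hf : Measurable f) :
    ∫⁻ t in Ioo 0 1, dualHardy a f t =
      ENNReal.ofReal (1 / (a + 1)) * ∫⁻ s in Ioo 0 1, f s := by
  have hg : Measurable fun t : ℝ => ENNReal.ofReal (t ^ a) := by fun_prop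
  have hk : Measurable fun s : ℝ => f s * ENNReal.ofReal (s ^ (-(1 + a))) := by fun_prop
  simp only [dualHardy]
  rw [lintegral_mul_setLIntegral_Ioo_comm volume hg hk, ← lintegral_const_mul _ hf]
  refine setLIntegral_congr_fun measurableSet_Ioo fun s hs => ?_
  rw [lintegral_Ioo_zero_rpow (by linarith) hs.1, mul_assoc, mul_comm,
    ← ENNReal.ofReal_mul (rpow_nonneg hs.1.le _), mul_div_assoc', ← rpow_add hs.1,
    show -(1 + a) + (a + 1) = 0 by ring, rpow_zero]

lemma dualHardy_le {a t : ℝ} (ha : 0 < a) (ht : 0 < t) {f : ℝ → ℝ≥0∞} {M : ℝ≥0∞}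
    (hM : ∀ᵐ s ∂volume.restrict (Ioi t), f s ≤ M) :
    dualHardy a f t ≤ ENNReal.ofReal (1 / a) * M := by
  have hw : Measurable fun s : ℝ => ENNReal.ofReal (s ^ (-(1 + a))) := by fun_prop
  calc dualHardy a f t
      ≤ ENNReal.ofReal (t ^ a) * ∫⁻ s in Ioi t, M * ENNReal.ofReal (s ^ (-(1 + a))) := by
        refine mul_le_mul_right ((lintegral_mono_set Ioo_subset_Ioi_self).trans ?_) _
        exact lintegral_mono_ae (hM.mono fun s hs => mul_le_mul_left hs _)
    _ = ENNReal.ofReal (t ^ a * (t ^ (-a) / a)) * M := by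
        rw [lintegral_const_mul _ hw, lintegral_Ioi_rpow (by linarith) ht,
          ENNReal.ofReal_mul (rpow_nonneg ht.le a), show -(1 + a) + 1 = -a by ring, neg_div_neg_eq]
        ring
    _ = ENNReal.ofReal (1 / a) * M := by
        rw [mul_div_assoc', ← rpow_add ht, add_neg_cancel, rpow_zero]

section phi

variable {n : ℕ} {β t : ℝ}

lemma phi_of_mem_Ioo (hβ : 0 ≤ β / n) (ht : t ∈ Ioo (0 : ℝ) 1) :
    phi n β t = t ^ (-1 + β / n) := by
  rw [phi, min_eq_left]
  simpa only [← rpow_neg_one t] using rpow_le_rpow_of_exponent_ge ht.1 ht.2.le (by linarith)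

lemma mul_phi_of_mem_Ioo (hβ : 0 < β / n) (ht : t ∈ Ioo (0 : ℝ) 1) :
    t * phi n β t = t ^ (β / n) := by
  rw [phi_of_mem_Ioo hβ.le ht, ← rpow_one_add' ht.1.le (by simp [hβ.ne'])]
  ring_nf

lemma sq_mul_phi_of_mem_Ioo (hβ : 0 ≤ β / n) (ht : t ∈ Ioo (0 : ℝ) 1) :
    t ^ 2 * phi n β t = t ^ (1 + β / n) := by
  rw [phi_of_mem_Ioo hβ ht, ← rpow_two, ← rpow_add ht.1]
  ring_nf

end phi

lemma enorm_Taux_le {n : ℕ} {β : ℝ} (hβ : 0 < β / n) (h : ℝ → ℝ) (t : ℝ) :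
    ‖Taux n β h t‖ₑ ≤ (Ioo 0 1).indicator (dualHardy (β / n) fun s => ‖h s‖ₑ) t := by
  by_cases ht : t ∈ Ioo (0 : ℝ) 1
  · rw [Taux, if_pos ht, indicator_of_mem ht, dualHardy, mul_phi_of_mem_Ioo hβ ht, enorm_mul,
      enorm_eq_ofReal (rpow_nonneg ht.1.le _)]
    refine mul_le_mul_right ((enorm_integral_le_lintegral_enorm _).trans_eq ?_) _
    refine setLIntegral_congr_fun measurableSet_Ioo fun s hs => ?_
    have hs' : s ∈ Ioo (0 : ℝ) 1 := ⟨ht.1.trans hs.1, hs.2⟩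
    rw [sq_mul_phi_of_mem_Ioo hβ.le hs', div_eq_mul_inv, enorm_mul, ← rpow_neg hs'.1.le,
      enorm_eq_ofReal (rpow_nonneg hs'.1.le _)]
  · simp [Taux, ht]

theorem stmt13_general (n : ℕ) (β : ℝ) (hβ0 : 0 < β) (hβn : β < n)
    (h : ℝ → ℝ) (hh : Measurable h) :
    eLpNorm (Taux n β h) 1 (volume.restrict (Ioi 0)) ≤
        ENNReal.ofReal ((n : ℝ) / (n + β)) * eLpNorm h 1 (volume.restrict (Ioi 0)) ∧
      eLpNorm (Taux n β h) ⊤ (volume.restrict (Ioi 0)) ≤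
        ENNReal.ofReal ((n : ℝ) / β) * eLpNorm h ⊤ (volume.restrict (Ioi 0)) := by
  have hn : (0 : ℝ) < n := hβ0.trans hβn
  have ha : 0 < β / n := div_pos hβ0 hn
  constructor
  · rw [eLpNorm_one_eq_lintegral_enorm, eLpNorm_one_eq_lintegral_enorm]
    calc ∫⁻ t in Ioi 0, ‖Taux n β h t‖ₑ
        ≤ ∫⁻ t in Ioi 0, (Ioo 0 1).indicator (dualHardy (β / n) fun s => ‖h s‖ₑ) t :=
          lintegral_mono (enorm_Taux_le ha h)
      _ = ∫⁻ t in Ioo 0 1, dualHardy (β / n) (fun s => ‖h s‖ₑ) t := by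
          rw [lintegral_indicator measurableSet_Ioo, Measure.restrict_restrict measurableSet_Ioo,
            Ioo_inter_Ioi, max_self]
      _ = ENNReal.ofReal ((n : ℝ) / (n + β)) * ∫⁻ s in Ioo 0 1, ‖h s‖ₑ := by
          rw [lintegral_dualHardy ha hh.enorm]
          congr 2
          field_simp
          ring
      _ ≤ ENNReal.ofReal ((n : ℝ) / (n + β)) * ∫⁻ s in Ioi 0, ‖h s‖ₑ := by
          gcongr
          exact Ioo_subset_Ioi_self
  · rw [eLpNorm_exponent_top, eLpNorm_exponent_top]
    refine essSup_le_of_ae_le _ (ae_of_all _ fun t => (enorm_Taux_le ha h t).trans ?_)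
    beta_reduce
    by_cases ht : t ∈ Ioo (0 : ℝ) 1
    · rw [indicator_of_mem ht, ← one_div_div β (n : ℝ)]
      exact dualHardy_le ha ht.1
        (ae_restrict_of_ae_restrict_of_subset (Ioi_subset_Ioi ht.1.le) ae_le_eLpNormEssSup)
    · simp [indicator_of_notMem ht]

theorem stmt13 (n : ℕ) (hn : 2 ≤ n) (β : ℝ) (hβ0 : 0 < β) (hβn : β < n)
    (h : ℝ → ℝ) (hh : Measurable h) :
    eLpNorm (Taux n β h) 1 (volume.restrict (Ioi 0)) ≤
        ENNReal.ofReal ((n : ℝ) / (n + β)) * eLpNorm h 1 (volume.restrict (Ioi 0)) ∧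
      eLpNorm (Taux n β h) ⊤ (volume.restrict (Ioi 0)) ≤
        ENNReal.ofReal ((n : ℝ) / β) * eLpNorm h ⊤ (volume.restrict (Ioi 0)) :=
  stmt13_general n β hβ0 hβn h hh
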